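/- arXiv:1105.3952 — 2 statements merged into one kernel-verified Lean document; each statement's English description precedes it below -/
import Mathlib

section
/- Let A be a finite group, p a prime, and Q a Sylow p-subgroup of A which is a TI subgroup of A and which contains an elementary abelian subgroup of order p^2. Then every normal subgroup R of A whose order is coprime to p is centralized by Q, i.e., R is contained in the centralizer C_A(Q) (equivalently, every element of R commutes with every element of Q). -/
/-!
Let `E ≤ Q` be elementary abelian of order `p²`, acting on `R` by conjugation. If `r ∈ R`
commutes with some `e ≠ 1` of `Q`, then `e ∈ Q ∩ Q ^ r`, so `r` normalises `Q` by the TI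
property, and then `[r, Q] ≤ Q ∩ R = 1`. Hence every element of `R` fixed by a nontrivial element
of `E` is fixed by all of `E`, and it remains to show that such a coprime action is trivial.

For abelian `R` write `N_H(x) = ∏_{h ∈ H} h • x`. Every `e ≠ 1` lies in exactly one of the
`p + 1` subgroups `L` of order `p` of `E`, so `∏_L N_L(x) = x ^ p * N_E(x)`; all norms `N_H(x)`
with `H ≠ 1` are fixed, hence so is `x ^ p`, hence `x`. In general one inducts on `|R|`: if
`Z(R) = 1`, then `R` is generated by its `E`-invariant Sylow subgroups, which are proper;
otherwise one passes to `Z(R)` and `R ⧸ Z(R)`, lifting fixed points of the quotient because the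
cosets of `Z(R)` have order prime to `p`.
-/

open MulAction Subgroup Finset

section CoprimeAction

variable {E R : Type*} [Group E] [Group R] [MulDistribMulAction E R]

abbrev Subgroup.mulDistribMulActionOfSMulMem (S : Subgroup R)
    (hS : ∀ (e : E) {s : R}, s ∈ S → e • s ∈ S) : MulDistribMulAction E S where
  smul e s := ⟨e • (s : R), hS e s.2⟩
  one_smul s := Subtype.ext (one_smul E (s : R))
  mul_smul a b s := Subtype.ext (mul_smul a b (s : R))
  smul_mul e a b := Subtype.ext (smul_mul' e (a : R) b)
  smul_one e := Subtype.ext (smul_one e)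

abbrev QuotientGroup.mulDistribMulActionOfSMulMem (N : Subgroup R) [N.Normal]
    (hN : ∀ (e : E) {n : R}, n ∈ N → e • n ∈ N) : MulDistribMulAction E (R ⧸ N) where
  smul e := QuotientGroup.map N N (MulDistribMulAction.toMonoidHom R e) fun _ => hN e
  one_smul := by rintro ⟨x⟩; exact congrArg QuotientGroup.mk (one_smul E x)
  mul_smul a b := by rintro ⟨x⟩; exact congrArg QuotientGroup.mk (mul_smul a b x)
  smul_mul e := by rintro ⟨x⟩ ⟨y⟩; exact congrArg QuotientGroup.mk (smul_mul' e x y)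
  smul_one e := congrArg QuotientGroup.mk (smul_one e)

theorem Subgroup.smul_mem_center (e : E) {z : R} (hz : z ∈ center R) : e • z ∈ center R := by
  rw [mem_center_iff] at hz ⊢
  intro g
  rw [← smul_inv_smul e g, ← smul_mul', ← smul_mul', hz]

theorem Subgroup.eq_top_of_forall_exists_sylow_le {G : Type*} [Group G] [Finite G]
    (H : Subgroup G) (h : ∀ q : ℕ, q.Prime → ∃ S : Sylow q G, (S : Subgroup G) ≤ H) : H = ⊤ := by
  refine index_eq_one.mp (Nat.eq_one_iff_not_exists_prime_dvd.mpr fun q hq hdvd => ?_)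
  have := Fact.mk hq
  obtain ⟨S, hS⟩ := h q hq
  exact S.not_dvd_index (hdvd.trans (index_dvd_of_le hS))

open scoped Pointwise in
theorem Sylow.exists_forall_smul_mem {p q : ℕ} [Fact p.Prime] [Fact q.Prime] [Finite R]
    (hE : IsPGroup p E) (hR : ¬ p ∣ Nat.card R) :
    ∃ S : Sylow q R, ∀ (e : E) {s : R}, s ∈ S → e • s ∈ S := by
  obtain ⟨S⟩ := (inferInstance : Nonempty (Sylow q R))
  have hSyl : ¬ p ∣ Nat.card (Sylow q R) :=
    fun h => hR (h.trans (S.card_dvd_index.trans S.index_dvd_card))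
  obtain ⟨S, hS⟩ := hE.nonempty_fixed_point_of_prime_not_dvd_card _ hSyl
  refine ⟨S, fun e s hs => ?_⟩
  rw [← hS e]
  exact smul_mem_pointwise_smul s e (S : Subgroup R) hs

theorem QuotientGroup.exists_mk_eq_and_stabilizer_le {p : ℕ} [Fact p.Prime] {X : Type*}
    [Group X] [MulAction E X] {N : Subgroup X} [MulAction E (X ⧸ N)]
    (hmk : ∀ (e : E) (x : X), e • (x : X ⧸ N) = ↑(e • x)) (hE : IsPGroup p E)
    (hN : ¬ p ∣ Nat.card N) (x : X ⧸ N) :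
    ∃ y : X, (y : X ⧸ N) = x ∧ stabilizer E x ≤ stabilizer E y := by
  let fiber : SubMulAction (stabilizer E x) X :=
    { carrier := mk ⁻¹' {x}
      smul_mem' := fun g y (hy : (y : X ⧸ N) = x) =>
        show ((g • y : X) : X ⧸ N) = x by rw [Subgroup.smul_def, ← hmk, hy]; exact g.2 }
  have hcard : Nat.card fiber = Nat.card N := by
    show Nat.card (mk ⁻¹' {x}) = _
    rw [card_preimage_mk, Nat.card_unique (α := ({x} : Set (X ⧸ N))), mul_one]
  obtain ⟨⟨y, hy⟩, hfix⟩ :=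
    (hE.to_subgroup (stabilizer E x)).nonempty_fixed_point_of_prime_not_dvd_card fiber (hcard ▸ hN)
  exact ⟨y, hy, fun g hg => congrArg Subtype.val (hfix ⟨g, hg⟩)⟩

section Quotient

variable {p : ℕ} [Fact p.Prime] {N : Subgroup R} [MulAction E (R ⧸ N)]
  (hmk : ∀ (e : E) (x : R), e • (x : R ⧸ N) = ↑(e • x)) (hE : IsPGroup p E)
  (hN : ¬ p ∣ Nat.card N)
include hmk hE hN

theorem fixedBy_quotient_subset_fixedPoints
    (hfix : ∀ e : E, e ≠ 1 → fixedBy R e ⊆ fixedPoints E R) {e : E} (he : e ≠ 1) :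
    fixedBy (R ⧸ N) e ⊆ fixedPoints E (R ⧸ N) := by
  intro x hx g
  obtain ⟨y, rfl, hy⟩ := QuotientGroup.exists_mk_eq_and_stabilizer_le hmk hE hN x
  rw [hmk, hfix e he (hy hx) g]

theorem fixedPoints_eq_univ_of_quotient (hNfix : (N : Set R) ⊆ fixedPoints E R)
    (hQ : fixedPoints E (R ⧸ N) = Set.univ) : fixedPoints E R = Set.univ := by
  refine Set.eq_univ_of_forall fun x => ?_
  obtain ⟨y, hy, hstab⟩ := QuotientGroup.exists_mk_eq_and_stabilizer_le hmk hE hN (x : R ⧸ N)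
  have hyfix : y ∈ fixedPoints E R :=
    fun g => hstab ((hQ ▸ Set.mem_univ _ : _ ∈ fixedPoints E _) g)
  rw [QuotientGroup.eq] at hy
  simpa using (FixedPoints.subgroup E R).mul_mem hyfix (hNfix hy)

end Quotient

theorem Subgroup.zpowers_eq_zpowers_of_mem {G : Type*} [Group G] [Finite G] {g g' : G}
    (h : g' ∈ zpowers g) (hord : orderOf g' = orderOf g) : zpowers g' = zpowers g :=
  eq_of_le_of_card_ge (zpowers_le.mpr h) (by rw [Nat.card_zpowers, Nat.card_zpowers, hord])

open Classical in
theorem prod_prod_zpowers_eq_pow_mul_prod {p : ℕ} [Fact p.Prime] {M : Type*} [Fintype E]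
    [CommMonoid M] (hcard : Nat.card E = p ^ 2) (hexp : ∀ e : E, e ^ p = 1) (f : E → M) :
    ∏ L ∈ (univ.erase 1).image zpowers, ∏ h ∈ univ.filter (· ∈ L), f h =
      f 1 ^ p * ∏ h, f h := by
  set T := (univ.erase (1 : E)).image zpowers
  have hord : ∀ e : E, e ≠ 1 → orderOf e = p := fun e he => orderOf_eq_prime (hexp e) he
  have hmaps : ∀ e ∈ univ.erase 1, zpowers e ∈ T := fun e he => mem_image_of_mem _ he
  have hfiber : ∀ L ∈ T,
      (univ.erase 1).filter (fun e => zpowers e = L) = (univ.filter (· ∈ L)).erase 1 := by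
    simp only [T, mem_image, mem_erase]
    rintro L ⟨e, ⟨he, -⟩, rfl⟩
    ext e'
    simp only [mem_filter, mem_erase, mem_univ, and_true, true_and]
    exact ⟨fun ⟨he', h⟩ => ⟨he', h ▸ mem_zpowers e'⟩,
      fun ⟨he', h⟩ => ⟨he', zpowers_eq_zpowers_of_mem h ((hord e' he').trans (hord e he).symm)⟩⟩
  have hline : ∀ L ∈ T, (univ.filter (· ∈ L)).card = p := by
    simp only [T, mem_image, mem_erase]
    rintro L ⟨e, ⟨he, -⟩, rfl⟩
    rw [← Fintype.card_subtype, ← Nat.card_eq_fintype_card, Nat.card_zpowers, hord e he]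
  have hT : T.card = p + 1 := by
    have hp := (Fact.out : p.Prime).two_le
    have h := card_eq_sum_card_fiberwise hmaps
    rw [sum_congr rfl fun L hL => by rw [hfiber L hL, card_erase_of_mem (by simp), hline L hL],
      sum_const, smul_eq_mul, card_erase_of_mem (mem_univ 1), card_univ,
      ← Nat.card_eq_fintype_card, hcard] at h
    refine Nat.eq_of_mul_eq_mul_right (m := p - 1) (by omega) ?_
    rw [← h, ← Nat.sq_sub_sq, one_pow]
  calc ∏ L ∈ T, ∏ h ∈ univ.filter (· ∈ L), f h
      = ∏ L ∈ T, (f 1 * ∏ e ∈ (univ.erase 1).filter (fun e => zpowers e = L), f e) :=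
        prod_congr rfl fun L hL => by rw [hfiber L hL, mul_prod_erase _ _ (by simp)]
    _ = f 1 ^ (p + 1) * ∏ e ∈ univ.erase 1, f e := by
        rw [prod_mul_distrib, prod_const, hT, prod_fiberwise_of_maps_to hmaps]
    _ = f 1 ^ p * ∏ h, f h := by rw [pow_succ, mul_assoc, mul_prod_erase _ _ (mem_univ 1)]

theorem smul_prod_filter_mem {M : Type*} [Fintype E] [CommMonoid M] [MulDistribMulAction E M]
    {H : Subgroup E} [DecidablePred (· ∈ H)] {g : E} (hg : g ∈ H) (x : M) :
    g • ∏ h ∈ univ.filter (· ∈ H), h • x = ∏ h ∈ univ.filter (· ∈ H), h • x := by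
  rw [smul_prod']
  exact prod_equiv (Equiv.mulLeft g) (by simp [H.mul_mem_cancel_left hg]) (by simp [mul_smul])

theorem fixedPoints_eq_univ_of_commGroup {p : ℕ} [Fact p.Prime] {A : Type*} [Fintype E]
    [CommGroup A] [Finite A] [MulDistribMulAction E A]
    (hcard : Nat.card E = p ^ 2) (hexp : ∀ e : E, e ^ p = 1) (hA : ¬ p ∣ Nat.card A)
    (hfix : ∀ e : E, e ≠ 1 → fixedBy A e ⊆ fixedPoints E A) : fixedPoints E A = Set.univ := by
  classical
  let C := FixedPoints.subgroup E A
  have hnorm : ∀ H : Subgroup E, H ≠ ⊥ → ∀ x : A, ∏ h ∈ univ.filter (· ∈ H), h • x ∈ C := by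
    intro H hH x
    obtain ⟨e, he, he1⟩ := H.bot_or_exists_ne_one.resolve_left hH
    exact hfix e he1 (smul_prod_filter_mem he x)
  have hpow : ∀ x : A, x ^ p ∈ C := by
    intro x
    have h := prod_prod_zpowers_eq_pow_mul_prod hcard hexp (· • x)
    simp only [one_smul] at h
    rw [eq_mul_inv_of_mul_eq h.symm]
    refine C.mul_mem (C.prod_mem fun L hL => ?_) (C.inv_mem ?_)
    · obtain ⟨e, he, rfl⟩ := mem_image.mp hL
      exact hnorm _ (zpowers_ne_bot.mpr (ne_of_mem_erase he)) x
    · have : Nontrivial E := Finite.one_lt_card_iff_nontrivial.mp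
        (hcard ▸ Nat.one_lt_pow two_ne_zero (Fact.out : p.Prime).one_lt)
      simpa using hnorm ⊤ top_ne_bot x
  refine Set.eq_univ_of_forall fun x => ?_
  have hcop : p.Coprime (orderOf x) := (Nat.Prime.coprime_iff_not_dvd Fact.out).2
    fun h => hA (h.trans (orderOf_dvd_natCard x))
  obtain ⟨m, hm⟩ := exists_pow_eq_self_of_coprime hcop
  exact hm ▸ C.pow_mem (hpow x) m

theorem fixedPoints_eq_univ_of_fixedBy_subset {p : ℕ} [Fact p.Prime] [Finite E]
    (hcard : Nat.card E = p ^ 2) (hexp : ∀ e : E, e ^ p = 1) [Finite R] (hR : ¬ p ∣ Nat.card R)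
    (hfix : ∀ e : E, e ≠ 1 → fixedBy R e ⊆ fixedPoints E R) : fixedPoints E R = Set.univ := by
  have hE : IsPGroup p E := IsPGroup.of_card hcard
  induction hn : Nat.card R using Nat.strong_induction_on generalizing R with
  | _ n IH =>
  subst hn
  have hsub : ∀ S : Subgroup R, S ≠ ⊤ → (∀ (e : E) {s : R}, s ∈ S → e • s ∈ S) →
      (S : Set R) ⊆ fixedPoints E R := by
    intro S hS hinv s hs
    let := S.mulDistribMulActionOfSMulMem hinv
    have h := IH (Nat.card S) ((card_le_card_group S).lt_of_ne (mt (card_eq_iff_eq_top S).mp hS))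
      (R := S) (fun h => hR (h.trans (card_subgroup_dvd_card S)))
      (fun e he t ht g => Subtype.ext (hfix e he (congrArg Subtype.val ht) g)) rfl
    exact fun g => congrArg Subtype.val ((h ▸ Set.mem_univ (⟨s, hs⟩ : S) : _ ∈ fixedPoints E S) g)
  rcases eq_or_ne (center R) ⊤ with hZ | hZ
  · let := Group.commGroupOfCenterEqTop hZ
    cases nonempty_fintype E
    exact fixedPoints_eq_univ_of_commGroup hcard hexp hR hfix
  rcases eq_or_ne (center R) ⊥ with hZ' | hZ'
  · have hC : FixedPoints.subgroup E R = ⊤ := by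
      refine eq_top_of_forall_exists_sylow_le _ fun q hq => ?_
      have := Fact.mk hq
      obtain ⟨S, hS⟩ := Sylow.exists_forall_smul_mem (q := q) hE hR
      refine ⟨S, hsub S (fun htop => ?_) hS⟩
      have : Nontrivial R := nontrivial_iff.mp (nontrivial_of_ne _ _ hZ)
      have hq : IsPGroup q R := (htop ▸ S.isPGroup').of_equiv topEquiv
      exact (nontrivial_iff_ne_bot _).mp hq.center_nontrivial hZ'
    exact Set.eq_univ_of_forall fun x => (hC ▸ mem_top x : x ∈ FixedPoints.subgroup E R)
  · have hN : ¬ p ∣ Nat.card (center R) := fun h => hR (h.trans (card_subgroup_dvd_card _))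
    let := QuotientGroup.mulDistribMulActionOfSMulMem (center R) (smul_mem_center (E := E))
    refine fixedPoints_eq_univ_of_quotient (fun _ _ => rfl) hE hN (hsub _ hZ smul_mem_center)
      (IH _ ?_ (R := R ⧸ center R) (fun h => hR (h.trans (card_quotient_dvd_card _)))
        (fun e he => fixedBy_quotient_subset_fixedPoints (fun _ _ => rfl) hE hN hfix he) rfl)
    rw [← (center R).card_mul_index]
    exact lt_mul_left (Nat.pos_of_ne_zero index_ne_zero_of_finite)
      ((one_lt_card_iff_ne_bot _).mpr hZ')

end CoprimeAction

theorem Subgroup.mem_centralizer_of_commute_of_forall_inf_conj_eq_bot {A : Type*} [Group A]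
    {Q R : Subgroup A}
    (hTI : ∀ a : A, a ∉ normalizer (Q : Set A) → Q ⊓ Q.map (MulAut.conj a).toMonoidHom = ⊥)
    (hR : R.Normal) (hQR : Disjoint Q R) {r e : A} (hr : r ∈ R) (he : e ∈ Q) (he1 : e ≠ 1)
    (hcomm : Commute e r) : r ∈ centralizer (Q : Set A) := by
  have hnorm : r ∈ normalizer (Q : Set A) := by
    by_contra h
    have hmem : e ∈ Q ⊓ Q.map (MulAut.conj r).toMonoidHom :=
      ⟨he, e, he, by simp [hcomm.symm.eq]⟩
    exact he1 (mem_bot.mp (hTI r h ▸ hmem))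
  rw [mem_centralizer_iff]
  intro q hq
  have hcomm' : r * q * r⁻¹ * q⁻¹ ∈ (⊥ : Subgroup A) := hQR.le_bot <|
    mem_inf.mpr ⟨Q.mul_mem ((mem_normalizer_iff.mp hnorm q).mp hq) (Q.inv_mem hq), by
      simpa only [mul_assoc] using R.mul_mem hr (hR.conj_mem _ (R.inv_mem hr) q)⟩
  rw [mem_bot, mul_inv_eq_one, mul_inv_eq_iff_eq_mul] at hcomm'
  exact hcomm'.symm

/-- If a Sylow `p`-subgroup `Q` of a finite group `A` is a TI subgroup containing an
elementary abelian subgroup of order `p ^ 2`, then every normal subgroup `R` of `A`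
of order coprime to `p` is centralized by `Q`. -/
theorem stmt5 {A : Type*} [Group A] [Finite A] {p : ℕ} (hp : p.Prime)
    (Q : Sylow p A)
    (hTI : ∀ a : A, a ∉ Subgroup.normalizer ((Q : Subgroup A) : Set A) →
      (Q : Subgroup A) ⊓ Subgroup.map (MulAut.conj a).toMonoidHom (Q : Subgroup A) = ⊥)
    (hE : ∃ E : Subgroup A, E ≤ (Q : Subgroup A) ∧ Nat.card E = p ^ 2 ∧
      ∀ x ∈ E, x ^ p = 1) :
    ∀ R : Subgroup A, R.Normal → (Nat.card R).Coprime p →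
      R ≤ Subgroup.centralizer ((Q : Subgroup A) : Set A) := by
  intro R hR hRp
  obtain ⟨E, hEQ, hEcard, hEexp⟩ := hE
  have := Fact.mk hp
  have hQR : Disjoint (Q : Subgroup A) R := by
    obtain ⟨k, hk⟩ := Q.isPGroup'.exists_card_eq
    exact disjoint_of_coprime_natCard (hk ▸ (hRp.pow_right k).symm)
  have hcent : ∀ e : E, e ≠ 1 → ∀ r : R, Commute (e : A) r →
      (r : A) ∈ centralizer ((Q : Subgroup A) : Set A) := fun e he r h =>
    mem_centralizer_of_commute_of_forall_inf_conj_eq_bot hTI hR hQR r.2 (hEQ e.2)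
      (by simpa using he) h
  let : MulDistribMulAction E R :=
    MulDistribMulAction.compHom R ((MulAut.conjNormal (H := R)).comp E.subtype)
  have hsmul : ∀ (e : E) (r : R), e • r = r ↔ Commute (e : A) r :=
    fun _ _ => Subtype.ext_iff.trans mul_inv_eq_iff_eq_mul
  have hfixed := fixedPoints_eq_univ_of_fixedBy_subset hEcard (fun e => Subtype.ext (hEexp e e.2))
    ((Nat.Prime.coprime_iff_not_dvd hp).mp hRp.symm) fun e he r hr g =>
      (hsmul g r).mpr (mem_centralizer_iff.mp (hcent e he r ((hsmul e r).mp hr)) g (hEQ g.2))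
  have : Nontrivial E := Finite.one_lt_card_iff_nontrivial.mp
    (hEcard ▸ Nat.one_lt_pow two_ne_zero hp.one_lt)
  obtain ⟨e, he⟩ := exists_ne (1 : E)
  intro r hr
  exact hcent e he ⟨r, hr⟩ ((hsmul e _).mp ((hfixed ▸ Set.mem_univ _ : _ ∈ fixedPoints E R) e))
end

section
/- Let p be a prime, h a positive integer, q = p^h, let n ≥ 3 be an odd integer, and let m = (q^n + 1)/(q + 1), which is an integer. Let F be the finite field with q^2 elements. If (x, y, z) in F^3 satisfies x^q + x = y^{q+1} and y^{q^2} - y = z^m, then z = 0. Consequently, the number of triples (x, y, z) in F^3 satisfying both equations is exactly q^3. -/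
/-!
Since `y ^ q ^ 2 = y` on the field with `q²` elements, the second equation reads `0 = z ^ m`.
What remains is the affine Hermitian curve `x ^ q + x = y ^ (q + 1)`. The relative trace
`x ↦ x ^ q + x` is additive; its kernel and its image (which lies in `𝔽_q = {c | c ^ q = c}`)
are root sets of polynomials of degree `q`, so `|ker| * |im| = q²` forces both to have size `q`.
The norm `y ^ (q + 1)` lies in `𝔽_q`, hence in the image, and so has exactly `q` preimages:
`q² * q` points in all.
-/

open Polynomial

theorem ncard_setOf_pow_add_mul_eq_zero_le {K : Type*} [Field K] {q : ℕ} (hq : 1 < q) (a : K) :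
    {x : K | x ^ q + a * x = 0}.ncard ≤ q := by
  set P : K[X] := X ^ q + C a * X
  have hdeg : (C a * X).degree < (X ^ q : K[X]).degree := by
    rw [degree_X_pow]
    exact (degree_C_mul_X_le a).trans_lt (by exact_mod_cast hq)
  have hP : P.natDegree = q := by
    rw [natDegree_add_eq_left_of_degree_lt hdeg, natDegree_X_pow]
  have hP0 : P ≠ 0 := by
    intro h; simp [h] at hP; omega
  have hroots : {x : K | x ^ q + a * x = 0} = P.rootSet K := by
    ext x; simp [mem_rootSet_of_ne hP0, P]
  rw [hroots, ← hP]
  exact ncard_rootSet_le P K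

theorem ncard_setOf_pow_eq_self_le {K : Type*} [Field K] {q : ℕ} (hq : 1 < q) :
    {x : K | x ^ q = x}.ncard ≤ q := by
  have h := ncard_setOf_pow_add_mul_eq_zero_le hq (-1 : K)
  simp only [neg_one_mul, ← sub_eq_add_neg, sub_eq_zero] at h
  exact h

theorem AddMonoidHom.card_ker_mul_card_range {G H : Type*} [AddGroup G] [AddGroup H]
    (f : G →+ H) : Nat.card f.ker * Nat.card f.range = Nat.card G := by
  rw [← AddSubgroup.index_ker, AddSubgroup.card_mul_index]

section
variable {K : Type*} [Field K] [Fintype K] {q : ℕ}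

theorem exists_prime_pow_eq_of_card_eq_sq (hK : Fintype.card K = q ^ 2) :
    ∃ p k : ℕ, p.Prime ∧ CharP K p ∧ q = p ^ k := by
  obtain ⟨p, hchar, n, hp, hcard⟩ := FiniteField.card' K
  have hdvd : q ∣ p ^ (n : ℕ) := hcard ▸ hK ▸ dvd_pow_self q two_ne_zero
  obtain ⟨k, -, hk⟩ := (Nat.dvd_prime_pow hp).1 hdvd
  exact ⟨p, k, hp, hchar, hk⟩

theorem one_lt_of_card_eq_sq (hK : Fintype.card K = q ^ 2) : 1 < q :=
  (Nat.one_lt_pow_iff two_ne_zero).1 (hK ▸ Fintype.one_lt_card)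

theorem add_pow_of_card_eq_sq (hK : Fintype.card K = q ^ 2) (x y : K) :
    (x + y) ^ q = x ^ q + y ^ q := by
  obtain ⟨p, k, hp, hchar, rfl⟩ := exists_prime_pow_eq_of_card_eq_sq hK
  have := Fact.mk hp
  exact add_pow_char_pow x y p k

theorem pow_pow_two_eq_self_of_card_eq_sq (hK : Fintype.card K = q ^ 2) (x : K) :
    x ^ q ^ 2 = x :=
  hK ▸ FiniteField.pow_card x

def relTrace (hK : Fintype.card K = q ^ 2) : K →+ K :=
  AddMonoidHom.mk' (fun x ↦ x ^ q + x) fun x y ↦ by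
    rw [add_pow_of_card_eq_sq hK]; ring

theorem relTrace_apply (hK : Fintype.card K = q ^ 2) (x : K) : relTrace hK x = x ^ q + x := rfl

theorem relTrace_pow_eq_self (hK : Fintype.card K = q ^ 2) (x : K) :
    relTrace hK x ^ q = relTrace hK x := by
  rw [relTrace_apply, add_pow_of_card_eq_sq hK, ← pow_mul, ← sq,
    pow_pow_two_eq_self_of_card_eq_sq hK, add_comm]

theorem card_ker_relTrace_le (hK : Fintype.card K = q ^ 2) : Nat.card (relTrace hK).ker ≤ q := by
  have hker : ((relTrace hK).ker : Set K) = {x | x ^ q + 1 * x = 0} := by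
    ext x; simp [relTrace_apply]
  rw [← SetLike.coe_sort_coe, Nat.card_coe_set_eq, hker]
  exact ncard_setOf_pow_add_mul_eq_zero_le (one_lt_of_card_eq_sq hK) 1

theorem range_relTrace_subset (hK : Fintype.card K = q ^ 2) :
    ((relTrace hK).range : Set K) ⊆ {c | c ^ q = c} := by
  rintro _ ⟨x, rfl⟩
  exact relTrace_pow_eq_self hK x

theorem card_range_relTrace_le (hK : Fintype.card K = q ^ 2) :
    Nat.card (relTrace hK).range ≤ q := by
  rw [← SetLike.coe_sort_coe, Nat.card_coe_set_eq]
  exact (Set.ncard_le_ncard (range_relTrace_subset hK)).trans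
    (ncard_setOf_pow_eq_self_le (one_lt_of_card_eq_sq hK))

theorem card_ker_relTrace (hK : Fintype.card K = q ^ 2) : Nat.card (relTrace hK).ker = q := by
  have hprod := (relTrace hK).card_ker_mul_card_range
  rw [Nat.card_eq_fintype_card (α := K), hK] at hprod
  have hker := card_ker_relTrace_le hK
  have hrange := card_range_relTrace_le hK
  nlinarith

theorem range_relTrace (hK : Fintype.card K = q ^ 2) :
    ((relTrace hK).range : Set K) = {c | c ^ q = c} := by
  have hq := one_lt_of_card_eq_sq hK
  have hcard : Nat.card (relTrace hK).range = q := by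
    have hprod := (relTrace hK).card_ker_mul_card_range
    rw [Nat.card_eq_fintype_card (α := K), hK, card_ker_relTrace hK, sq] at hprod
    exact Nat.eq_of_mul_eq_mul_left (by omega) hprod
  refine Set.eq_of_subset_of_ncard_le (range_relTrace_subset hK) ?_
  rw [← SetLike.coe_sort_coe, Nat.card_coe_set_eq] at hcard
  rw [hcard]
  exact ncard_setOf_pow_eq_self_le hq

theorem card_relTrace_fiber (hK : Fintype.card K = q ^ 2) {c : K} (hc : c ^ q = c) :
    Nat.card {x : K // x ^ q + x = c} = q := by
  obtain ⟨a, rfl⟩ : c ∈ (relTrace hK).range := by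
    rw [← SetLike.mem_coe, range_relTrace hK]; exact hc
  exact (Nat.card_congr ((relTrace hK).fiberEquivKer a)).trans (card_ker_relTrace hK)

theorem card_hermitian_points (hK : Fintype.card K = q ^ 2) :
    Nat.card {t : K × K // t.1 ^ q + t.1 = t.2 ^ (q + 1)} = q ^ 3 := by
  have hnorm (y : K) : (y ^ (q + 1)) ^ q = y ^ (q + 1) := by
    rw [← pow_mul, add_mul, one_mul, ← sq, pow_add, pow_pow_two_eq_self_of_card_eq_sq hK,
      ← pow_succ']
  have e : {t : K × K // t.1 ^ q + t.1 = t.2 ^ (q + 1)} ≃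
      Σ y : K, {x : K // x ^ q + x = y ^ (q + 1)} :=
    ((Equiv.prodComm K K).subtypeEquiv fun _ ↦ Iff.rfl).trans
      (Equiv.subtypeProdEquivSigmaSubtype fun y x ↦ x ^ q + x = y ^ (q + 1))
  rw [Nat.card_congr e, Nat.card_sigma]
  simp only [card_relTrace_fiber hK (hnorm _), Finset.sum_const, Finset.card_univ, hK, smul_eq_mul]
  ring
end

theorem stmt16_general (q : ℕ)
    (n : ℕ) (m : ℕ) (hm : m * (q + 1) = q ^ n + 1)
    {F : Type*} [Field F] [Fintype F] (hF : Fintype.card F = q ^ 2) :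
    (∀ x y z : F, x ^ q + x = y ^ (q + 1) → y ^ q ^ 2 - y = z ^ m → z = 0) ∧
    Nat.card {t : F × F × F //
      t.1 ^ q + t.1 = t.2.1 ^ (q + 1) ∧ t.2.1 ^ q ^ 2 - t.2.1 = t.2.2 ^ m} = q ^ 3 := by
  have hm0 : m ≠ 0 := by
    rintro rfl
    simp at hm
  have hz (x y z : F) (_ : x ^ q + x = y ^ (q + 1)) (h : y ^ q ^ 2 - y = z ^ m) : z = 0 :=
    (pow_eq_zero_iff hm0).1 (by rw [← h, pow_pow_two_eq_self_of_card_eq_sq hF, sub_self])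
  refine ⟨hz, ?_⟩
  rw [← card_hermitian_points hF]
  exact Nat.card_congr
    { toFun t := ⟨(t.1.1, t.1.2.1), t.2.1⟩
      invFun s := ⟨(s.1.1, s.1.2, 0), s.2, by
        rw [pow_pow_two_eq_self_of_card_eq_sq hF, sub_self, zero_pow hm0]⟩
      left_inv := by
        rintro ⟨⟨x, y, z⟩, h₁, h₂⟩
        obtain rfl := hz x y z h₁ h₂
        rfl
      right_inv _ := rfl }

/-- Every point of the curve `C_n : x^q + x = y^{q+1}, y^{q^2} - y = z^m` rational over
the field `F` with `q^2` elements has `z = 0`, and the number of such points is `q^3`. -/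
theorem stmt16 {p hexp : ℕ} (hp : p.Prime) (hh : 0 < hexp) (q : ℕ) (hq : q = p ^ hexp)
    (n : ℕ) (hn : 3 ≤ n) (hodd : Odd n) (m : ℕ) (hm : m * (q + 1) = q ^ n + 1)
    {F : Type*} [Field F] [Fintype F] (hF : Fintype.card F = q ^ 2) :
    (∀ x y z : F, x ^ q + x = y ^ (q + 1) → y ^ q ^ 2 - y = z ^ m → z = 0) ∧
    Nat.card {t : F × F × F //
      t.1 ^ q + t.1 = t.2.1 ^ (q + 1) ∧ t.2.1 ^ q ^ 2 - t.2.1 = t.2.2 ^ m} = q ^ 3 :=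
  stmt16_general q n m hm hF
end
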